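/- For all natural numbers j and n, every k : Henc (j+1) (n+1), every model M : HMod (j+1) n and every element m : |M|, one has ev (eb (j+1) n (flip k)) (insert₁ M m) = ev (eb (j+1) n k) (cons m M). (This is the set-level, de Bruijn counterpart of the paper's Lemma stating seb_{j+1} (flip k₊) (insert₁ M₊ m₊) ≡ seb_{j+1} k₊ (m₊ :: M₊), the key lemma needed for the proof that [lamH]₀ ≡ lamH_{j+1}.) -/

import Mathlib

/-- The impredicative HOAS encoding of λ-terms with `j` holes and `n` free variables. -/
def Henc (j n : ℕ) : Type 1 :=
  ∀ (H : Type), (Fin j → H) → (Fin n → H) → (H → H → H) → ((H → H) → H) → H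

/-- Exchange the distinguished last variable with a fresh hole `0` and shift
the remaining holes up by one. -/
def eb (j n : ℕ) (h : Henc j (n + 1)) : Henc (j + 1) n :=
  fun H hs vs ap lm => h H (hs ∘ Fin.succ) (Fin.snoc vs (hs 0)) ap lm

/-- Inverse direction: hole `0` becomes the distinguished last variable. -/
def ebInv (j n : ℕ) (e : Henc (j + 1) n) : Henc j (n + 1) :=
  fun H hs vs ap lm => e H (Fin.cons (vs (Fin.last n)) hs) (vs ∘ Fin.castSucc) ap lm

/-- HOAS models with `j` holes and `n` free variables. -/
def HModel (j n : ℕ) : Type 1 :=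
  Σ H : Type, (Fin j → H) × (Fin n → H) × (H → H → H) × ((H → H) → H)

def carrier {j n : ℕ} (M : HModel j n) : Type := M.1
def holesOf {j n : ℕ} (M : HModel j n) : Fin j → carrier M := M.2.1
def varOf {j n : ℕ} (M : HModel j n) : Fin n → carrier M := M.2.2.1
def appOf {j n : ℕ} (M : HModel j n) : carrier M → carrier M → carrier M := M.2.2.2.1
def hlamOf {j n : ℕ} (M : HModel j n) : (carrier M → carrier M) → carrier M := M.2.2.2.2

/-- Evaluation of a HOAS encoding in a model. -/
def ev {j n : ℕ} (h : Henc j n) (M : HModel j n) : carrier M :=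
  h (carrier M) (holesOf M) (varOf M) (appOf M) (hlamOf M)

/-- Push `m` onto the hole environment of `M`, at hole index `0`. -/
def consM {j n : ℕ} (M : HModel j n) (m : carrier M) : HModel (j + 1) n :=
  ⟨carrier M, Fin.cons m (holesOf M), varOf M, appOf M, hlamOf M⟩

/-- Insert `m` into the hole environment of `M` at hole index `1`. -/
def insert₁ {j n : ℕ} (M : HModel (j + 1) n) (m : carrier M) : HModel (j + 2) n :=
  ⟨carrier M,
    Fin.cases (motive := fun _ => carrier M) (holesOf M 0)
      (Fin.cases (motive := fun _ => carrier M) m (fun k => holesOf M k.succ)),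
    varOf M, appOf M, hlamOf M⟩

/-- The transposition of `Fin (n+2)` exchanging the indices `n` and `n+1`
and fixing all other indices. -/
def tau (n : ℕ) : Fin (n + 2) → Fin (n + 2) :=
  ⇑(Equiv.swap ((Fin.last n).castSucc) (Fin.last (n + 1)))

/-- Swap the interpretation of the two last free variables. -/
def swapTopVars {j n : ℕ} (h : Henc j (n + 2)) : Henc j (n + 2) :=
  fun H hs vs ap lm => h H hs (vs ∘ tau n) ap lm

/-- The flip map on abstracted HOAS encodings. -/
def flip' {j n : ℕ} : Henc (j + 1) (n + 1) → Henc (j + 1) (n + 1) :=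
  eb j (n + 1) ∘ swapTopVars ∘ ebInv j (n + 1)

theorem flip_insert₁ (j n : ℕ) (k : Henc (j + 1) (n + 1))
    (M : HModel (j + 1) n) (m : carrier M) :
    ev (eb (j + 1) n (flip' k)) (insert₁ M m) = ev (eb (j + 1) n k) (consM M m) := by
  show k (carrier M) _ _ _ _ = k (carrier M) _ _ _ _
  congr 1
  · funext i
    refine Fin.cases ?_ (fun i => ?_) i <;>
      simp [insert₁, consM, holesOf, varOf, tau, Fin.cases_succ', Equiv.swap_apply_right, carrier] <;> rfl
  · funext i
    refine Fin.lastCases ?_ (fun i => ?_) i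
    · show ((_ ∘ ⇑(Equiv.swap (Fin.last n).castSucc (Fin.last (n + 1)))) ∘ Fin.castSucc)
        (Fin.last n) = _
      rw [Function.comp_apply, Function.comp_apply, Equiv.swap_apply_left, Fin.snoc_last]
      rw [Fin.snoc_last]
      exact rfl
    · have h1 : (i : ℕ) ≠ n := Nat.ne_of_lt i.isLt
      have h2 : (i : ℕ) ≠ n + 1 := by omega
      simp [tau, insert₁, consM, holesOf, varOf, Equiv.swap_apply_def, Fin.ext_iff, h1, h2, carrier]
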